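/- arXiv:1106.5947 — 4 statements merged into one kernel-verified Lean document; each statement's English description precedes it below -/
import Mathlib

section
/- The number of cyclically reduced words of length m in the free group F_r on r generators equals (2r-1)^m + 1 + (r-1)(1+(-1)^m). -/
/-- A cyclically reduced word of length `m` in the free group `F_r`: a cyclic
sequence of letters (a generator index together with a sign: `a_i` or `a_i⁻¹`)
such that no letter is cyclically followed by its inverse. -/
def CyclicallyReduced (r m : ℕ) : Type :=
  {w : ZMod m → Fin r × Bool //
    ∀ i : ZMod m, (w i).1 = (w (i + 1)).1 → (w i).2 = (w (i + 1)).2}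

open Matrix Finset

/-! ### Auxiliary setup: the transfer matrix -/

abbrev VV (r : ℕ) := Fin r × Bool

def Amat (r : ℕ) : Matrix (VV r) (VV r) ℤ :=
  Matrix.of fun x y => if x.1 = y.1 → x.2 = y.2 then 1 else 0

def Jmat (r : ℕ) : Matrix (VV r) (VV r) ℤ := Matrix.of fun _ _ => 1

def Pmat (r : ℕ) : Matrix (VV r) (VV r) ℤ :=
  Matrix.of fun x y => if y = (x.1, !x.2) then 1 else 0

lemma inv_inv_iff (y z : VV r) : (y = (z.1, !z.2)) ↔ z = (y.1, !y.2) := by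
  obtain ⟨a, b⟩ := y; obtain ⟨c, d⟩ := z
  cases b <;> cases d <;> simp [Prod.ext_iff, eq_comm]

lemma Amat_eq (r : ℕ) : Amat r = Jmat r - Pmat r := by
  ext ⟨x1, x2⟩ ⟨y1, y2⟩
  by_cases h : x1 = y1 <;> cases x2 <;> cases y2 <;>
    simp [Amat, Jmat, Pmat, h, Prod.ext_iff, Matrix.sub_apply] <;> omega

lemma PP (r : ℕ) : Pmat r * Pmat r = 1 := by
  ext x y
  simp only [Pmat, mul_apply, of_apply, one_apply]
  rw [Finset.sum_eq_single (x.1, !x.2)]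
  · obtain ⟨a, b⟩ := x; obtain ⟨c, d⟩ := y
    cases b <;> cases d <;> simp [Prod.ext_iff, eq_comm]
  · intro z _ hz
    simp [show ¬ z = (x.1, !x.2) from hz]
  · simp

lemma JJ (r : ℕ) : Jmat r * Jmat r = (2 * (r:ℤ)) • Jmat r := by
  ext x y
  simp [Jmat, mul_apply, Fintype.card_prod, mul_comm]

lemma JP (r : ℕ) : Jmat r * Pmat r = Jmat r := by
  ext x y
  simp [Jmat, Pmat, mul_apply, inv_inv_iff, Finset.sum_ite_eq']

lemma PJ (r : ℕ) : Pmat r * Jmat r = Jmat r := by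
  ext x y
  simp [Jmat, Pmat, mul_apply, Finset.sum_ite_eq']

lemma traceJ (r : ℕ) : Matrix.trace (Jmat r) = 2 * (r:ℤ) := by
  simp [Jmat, Matrix.trace, Matrix.diag, Fintype.card_prod, mul_comm]

lemma traceP (r : ℕ) : Matrix.trace (Pmat r) = 0 := by
  simp [Pmat, Matrix.trace, Matrix.diag, Prod.ext_iff]

/-! ### Coefficients of powers of the transfer matrix -/

def aaC : ℕ → ℤ := fun m => if Even m then 1 else 0
def bbC : ℕ → ℤ := fun m => if Even m then 0 else -1
def ccC (r : ℕ) : ℕ → ℤ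
  | 0 => 0
  | (m+1) => (2*(r:ℤ) - 1) * ccC r m + (-1)^m

lemma aa_succ (m : ℕ) : aaC (m+1) = -bbC m := by
  rcases Nat.even_or_odd m with h | h
  · simp [aaC, bbC, Nat.even_add_one, h]
  · simp [aaC, bbC, Nat.even_add_one, Nat.not_even_iff_odd.mpr h, h]

lemma bb_succ (m : ℕ) : bbC (m+1) = -aaC m := by
  rcases Nat.even_or_odd m with h | h
  · simp [aaC, bbC, Nat.even_add_one, h]
  · simp [aaC, bbC, Nat.even_add_one, Nat.not_even_iff_odd.mpr h, h]

lemma aa_add_bb (m : ℕ) : aaC m + bbC m = (-1)^m := by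
  rcases Nat.even_or_odd m with h | h
  · simp [aaC, bbC, h, h.neg_one_pow]
  · simp [aaC, bbC, Nat.not_even_iff_odd.mpr h, h.neg_one_pow]

lemma two_aa (m : ℕ) : 2 * aaC m = 1 + (-1)^m := by
  rcases Nat.even_or_odd m with h | h
  · simp [aaC, h, h.neg_one_pow]
  · simp [aaC, Nat.not_even_iff_odd.mpr h, h.neg_one_pow]

lemma two_r_cc (r m : ℕ) : 2 * (r:ℤ) * ccC r m = (2*(r:ℤ)-1)^m - (-1)^m := by
  induction m with
  | zero => simp [ccC]
  | succ m ih =>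
    simp only [ccC, pow_succ]
    ring_nf
    ring_nf at ih
    nlinarith [ih]

lemma Apow (r m : ℕ) :
    Amat r ^ m = aaC m • (1 : Matrix (VV r) (VV r) ℤ) + bbC m • Pmat r + ccC r m • Jmat r := by
  induction m with
  | zero => simp [aaC, bbC, ccC]
  | succ m ih =>
    rw [pow_succ, ih, Amat_eq]
    rw [aa_succ, bb_succ, show ccC r (m+1) = (2*(r:ℤ)-1) * ccC r m + (aaC m + bbC m) by
      rw [aa_add_bb]; rfl]
    simp only [add_mul, smul_mul_assoc, mul_sub, one_mul, PP, JJ, JP, PJ, Matrix.mul_smul,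
      smul_smul]
    module

lemma traceApow (r m : ℕ) :
    Matrix.trace (Amat r ^ m) = (2*(r:ℤ)-1)^m + 1 + ((r:ℤ)-1) * (1 + (-1)^m) := by
  rw [Apow]
  simp only [Matrix.trace_add, Matrix.trace_smul, Matrix.trace_one, traceJ, traceP,
    Fintype.card_prod, Fintype.card_bool, Fintype.card_fin]
  push_cast
  simp only [smul_eq_mul]
  linear_combination (r:ℤ) * two_aa m + two_r_cc r m

/-! ### Counting paths and cycles via the transfer matrix -/

lemma entry_count (r : ℕ) : ∀ (k : ℕ) (u v : VV r),
    (Amat r ^ k) u v = ∑ s : Fin (k+1) → VV r,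
      if s 0 = u ∧ s (Fin.last k) = v then
        ∏ i : Fin k, Amat r (s i.castSucc) (s i.succ) else 0 := by
  intro k
  induction k with
  | zero =>
    intro u v
    rw [← Equiv.sum_comp (Equiv.funUnique (Fin 1) (VV r)).symm]
    simp only [pow_zero, one_apply]
    simp only [Equiv.funUnique, Equiv.coe_fn_symm_mk, Function.const_apply]
    by_cases h : u = v
    · subst h
      rw [Finset.sum_eq_single u] <;> simp +contextual
    · rw [Finset.sum_eq_zero] <;> simp +contextual [h]
  | succ k ih =>
    intro u v
    trans ∑ t : Fin (k+1) → VV r, if t (Fin.last k) = v then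
        Amat r u (t 0) * ∏ i : Fin k, Amat r (t i.castSucc) (t i.succ) else 0
    · rw [pow_succ', mul_apply]
      simp only [ih, Finset.mul_sum]
      rw [Finset.sum_comm]
      apply Finset.sum_congr rfl
      intro t _
      simp only [mul_ite, mul_zero, ite_and]
      rw [Finset.sum_ite_eq]
      simp
    · rw [← Equiv.sum_comp (Fin.consEquiv (n := k+1) (fun _ => VV r))]
      conv_rhs => rw [Fintype.sum_prod_type]
      rw [Finset.sum_comm]
      apply Finset.sum_congr rfl
      intro t _
      have hterm : ∀ w : VV r,
          (if (Fin.consEquiv fun _ => VV r) (w, t) 0 = u ∧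
              (Fin.consEquiv fun _ => VV r) (w, t) (Fin.last (k+1)) = v then
            ∏ i : Fin (k+1), Amat r ((Fin.consEquiv fun _ => VV r) (w, t) i.castSucc)
              ((Fin.consEquiv fun _ => VV r) (w, t) i.succ) else 0)
          = if w = u ∧ t (Fin.last k) = v then
              Amat r w (t 0) * ∏ i : Fin k, Amat r (t i.castSucc) (t i.succ) else 0 := by
        intro w
        have hlast : (Fin.cons w t : Fin (k+2) → VV r) (Fin.last (k+1)) = t (Fin.last k) := by
          rw [show Fin.last (k+1) = (Fin.last k).succ from rfl, Fin.cons_succ]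
        have hprod : ∏ i : Fin (k+1), Amat r ((Fin.cons w t : Fin (k+2) → VV r) i.castSucc)
              ((Fin.cons w t : Fin (k+2) → VV r) i.succ)
            = Amat r w (t 0) * ∏ i : Fin k, Amat r (t i.castSucc) (t i.succ) := by
          rw [Fin.prod_univ_succ]
          simp only [Fin.castSucc_zero, Fin.cons_zero, ← Fin.succ_zero_eq_one, Fin.cons_succ]
          congr 1
        simp only [Fin.consEquiv_apply, Fin.cons_zero, hlast, hprod]
      simp only [hterm, ite_and]
      rw [Finset.sum_ite_eq']
      simp

lemma trace_count (r n : ℕ) :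
    Matrix.trace (Amat r ^ (n+1)) =
      ∑ f : Fin (n+1) → VV r, ∏ i : Fin (n+1), Amat r (f i) (f (i+1)) := by
  rw [Matrix.trace]
  simp only [Matrix.diag, entry_count]
  rw [Finset.sum_comm]
  have step1 : ∀ s : Fin (n+2) → VV r,
      (∑ u : VV r, if s 0 = u ∧ s (Fin.last (n+1)) = u then
        ∏ i : Fin (n+1), Amat r (s i.castSucc) (s i.succ) else 0)
      = if s (Fin.last (n+1)) = s 0 then
          ∏ i : Fin (n+1), Amat r (s i.castSucc) (s i.succ) else 0 := by
    intro s
    simp only [ite_and]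
    rw [Finset.sum_ite_eq]
    simp
  simp only [step1]
  rw [← Equiv.sum_comp (Fin.snocEquiv (n := n+1) (fun _ => VV r))]
  conv_lhs => rw [Fintype.sum_prod_type]
  rw [Finset.sum_comm]
  apply Finset.sum_congr rfl
  intro t _
  have key : ∀ i : Fin (n+1),
      (Fin.snoc t (t 0) : Fin (n+2) → VV r) i.succ = t (i + 1) := by
    intro i
    rcases eq_or_ne i (Fin.last n) with h | h
    · subst h
      rw [show (Fin.last n).succ = Fin.last (n+1) from rfl, Fin.snoc_last, Fin.last_add_one]
    · have h2 : ((i + 1 : Fin (n+1))).val = i.val + 1 := by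
        rw [Fin.val_add_one]; simp [h]
      have h3 : i.succ = (i + 1 : Fin (n+1)).castSucc := by
        ext; simp [h2]
      rw [h3, Fin.snoc_castSucc]
  have hterm : ∀ x : VV r,
      (if (Fin.snoc t x : Fin (n+2) → VV r) (Fin.last (n+1)) = (Fin.snoc t x : Fin (n+2) → VV r) 0
        then ∏ i : Fin (n+1), Amat r ((Fin.snoc t x : Fin (n+2) → VV r) i.castSucc)
          ((Fin.snoc t x : Fin (n+2) → VV r) i.succ) else 0)
      = if x = t 0 then ∏ i : Fin (n+1), Amat r ((Fin.snoc t x : Fin (n+2) → VV r) i.castSucc)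
          ((Fin.snoc t x : Fin (n+2) → VV r) i.succ) else 0 := by
    intro x
    rw [Fin.snoc_last, show (0 : Fin (n+2)) = (0 : Fin (n+1)).castSucc from rfl,
      Fin.snoc_castSucc]
  simp only [Fin.snocEquiv, Equiv.coe_fn_mk, hterm]
  refine Eq.trans (Finset.sum_congr rfl (fun x _ => hterm x)) ?_
  rw [Finset.sum_ite_eq']
  simp only [Finset.mem_univ, if_true]
  apply Finset.prod_congr rfl
  intro i _
  rw [Fin.snoc_castSucc, key i]

/-- The number of cyclically reduced words of length `m` in the free group on `r`
generators equals `(2r-1)^m + 1 + (r-1)(1+(-1)^m)`. -/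
theorem count_cyclically_reduced (r m : ℕ) (hm : 1 ≤ m) :
    (Nat.card (CyclicallyReduced r m) : ℤ) =
      (2 * (r : ℤ) - 1) ^ m + 1 + ((r : ℤ) - 1) * (1 + (-1) ^ m) := by
  obtain ⟨n, rfl⟩ : ∃ n, m = n + 1 := ⟨m - 1, by omega⟩
  rw [← traceApow r (n+1), trace_count]
  have hprod : ∀ f : Fin (n+1) → VV r,
      (∏ i : Fin (n+1), Amat r (f i) (f (i+1)))
        = if (∀ i : Fin (n+1), (f i).1 = (f (i+1)).1 → (f i).2 = (f (i+1)).2) then 1 else 0 := by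
    intro f
    unfold Amat
    simp only [Matrix.of_apply]
    rw [Finset.prod_boole]
    simp
  simp only [hprod]
  rw [Finset.sum_boole]
  have : Nat.card (CyclicallyReduced r (n+1)) =
      (Finset.univ.filter (fun f : Fin (n+1) → VV r =>
        ∀ i : Fin (n+1), (f i).1 = (f (i+1)).1 → (f i).2 = (f (i+1)).2)).card := by
    rw [show CyclicallyReduced r (n+1) = {f : Fin (n+1) → VV r //
      ∀ i : Fin (n+1), (f i).1 = (f (i+1)).1 → (f i).2 = (f (i+1)).2} from rfl]
    rw [Nat.card_eq_fintype_card, Fintype.card_subtype]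
  rw [this]
end

section
/- Let c > 1 be a real number and consider the Laurent polynomial U_n(c(x+1/x)/2), where U_n is the n-th Chebyshev polynomial of the second kind. Then every coefficient of x^k for k ≡ n (mod 2), -n ≤ k ≤ n, is strictly positive, and all other coefficients are zero. -/
open Polynomial Finset

/-- `IsLaurentCoeffs n p c a` says `a : ℤ → ℝ` is the family of coefficients of the
Laurent polynomial `p(c(x+1/x)/2)`: it is supported on `[-n, n]` and
`p(c(x+1/x)/2) = ∑_{k=-n}^{n} a_k x^k` for all nonzero real `x`.  (Such a family
is unique.) -/
def IsLaurentCoeffs (n : ℕ) (p : Polynomial ℝ) (c : ℝ) (a : ℤ → ℝ) : Prop :=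
  (∀ k : ℤ, (k < -(n : ℤ) ∨ (n : ℤ) < k) → a k = 0) ∧
  ∀ x : ℝ, x ≠ 0 →
    p.eval (c * (x + x⁻¹) / 2) = ∑ k ∈ Finset.Icc (-(n : ℤ)) (n : ℤ), a k * x ^ k

/-- The coefficient family of `U n (c(x+1/x)/2)`. -/
noncomputable def chebA (c : ℝ) : ℕ → ℤ → ℝ
  | 0 => fun k => if k = 0 then 1 else 0
  | 1 => fun k => if k = 1 ∨ k = -1 then c else 0
  | (n+2) => fun k => c * (chebA c (n+1) (k-1) + chebA c (n+1) (k+1)) - chebA c n k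

lemma chebA_add_two (c : ℝ) (n : ℕ) (k : ℤ) :
    chebA c (n+2) k = c * (chebA c (n+1) (k-1) + chebA c (n+1) (k+1)) - chebA c n k := rfl

def SuppP (c : ℝ) (n : ℕ) : Prop :=
  ∀ k : ℤ, (k < -(n:ℤ) ∨ (n:ℤ) < k ∨ k % 2 ≠ (n:ℤ) % 2) → chebA c n k = 0

def PosP (c : ℝ) (n : ℕ) : Prop :=
  ∀ k : ℤ, -(n:ℤ) ≤ k → k ≤ (n:ℤ) → k % 2 = (n:ℤ) % 2 → 0 < chebA c n k

def GrowthP (c : ℝ) (n : ℕ) : Prop :=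
  ∀ k : ℤ, c * chebA c n (k-1) ≤ chebA c (n+1) k ∧ c * chebA c n (k+1) ≤ chebA c (n+1) k

lemma chebA_nonneg {c : ℝ} {n : ℕ} (h1 : SuppP c n) (h2 : PosP c n) (k : ℤ) :
    0 ≤ chebA c n k := by
  by_cases h : k < -(n:ℤ) ∨ (n:ℤ) < k ∨ k % 2 ≠ (n:ℤ) % 2
  · rw [h1 k h]
  · push_neg at h
    exact (h2 k h.1 h.2.1 h.2.2).le

lemma chebA_main (c : ℝ) (hc : 1 < c) :
    ∀ n, (SuppP c n ∧ PosP c n) ∧ (SuppP c (n+1) ∧ PosP c (n+1)) ∧ GrowthP c n := by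
  have hc0 : (0:ℝ) < c := lt_trans one_pos hc
  intro n
  induction n with
  | zero =>
    have hS0 : SuppP c 0 := by
      intro k hk
      simp only [chebA]
      rw [if_neg]
      simp only [Nat.cast_zero] at hk
      omega
    have hP0 : PosP c 0 := by
      intro k h1 h2 h3
      simp only [Nat.cast_zero] at h1 h2
      have : k = 0 := by omega
      subst this
      simp [chebA]
    have hS1 : SuppP c 1 := by
      intro k hk
      simp only [chebA]
      rw [if_neg]
      simp only [Nat.cast_one] at hk
      omega
    have hP1 : PosP c 1 := by
      intro k h1 h2 h3
      simp only [Nat.cast_one] at h1 h2 h3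
      have : k = 1 ∨ k = -1 := by omega
      simp only [chebA, if_pos this]
      exact hc0
    refine ⟨⟨hS0, hP0⟩, ⟨hS1, hP1⟩, ?_⟩
    intro k
    constructor <;>
    · simp only [chebA]
      split_ifs with h1 h2 h2 <;> first
        | (exfalso; omega)
        | nlinarith
        | simp
  | succ n ih =>
    obtain ⟨⟨hS0, hP0⟩, ⟨hS1, hP1⟩, hG⟩ := ih
    have hnn0 := chebA_nonneg hS0 hP0
    have hnn1 := chebA_nonneg hS1 hP1
    have hS2 : SuppP c (n+2) := by
      intro k hk
      push_cast at hk
      rw [chebA_add_two,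
        hS1 (k-1) (by push_cast; omega),
        hS1 (k+1) (by push_cast; omega),
        hS0 k (by push_cast; omega)]
      ring
    have hP2 : PosP c (n+2) := by
      intro k hk1 hk2 hk3
      push_cast at hk1 hk2 hk3
      rw [chebA_add_two]
      have hg : c * chebA c n k ≤ chebA c (n+1) (k-1) := by
        have := (hG (k-1)).2
        simpa using this
      by_cases hkc : k ≤ (n:ℤ)
      · have hpos : 0 < chebA c (n+1) (k+1) :=
          hP1 (k+1) (by push_cast; omega) (by push_cast; omega) (by push_cast; omega)
        nlinarith [hnn0 k, hnn1 (k-1)]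
      · have hk' : k = (n:ℤ) + 2 := by omega
        have hpos : 0 < chebA c (n+1) (k-1) :=
          hP1 (k-1) (by push_cast; omega) (by push_cast; omega) (by push_cast; omega)
        have hz : chebA c n k = 0 := hS0 k (by omega)
        nlinarith [hnn1 (k+1)]
    refine ⟨⟨hS1, hP1⟩, ⟨hS2, hP2⟩, ?_⟩
    intro k
    rw [chebA_add_two]
    constructor
    · have h1 : c * chebA c n k ≤ chebA c (n+1) (k+1) := by
        have := (hG (k+1)).1
        simpa using this
      nlinarith [hnn0 k, hnn1 (k-1), hnn1 (k+1)]
    · have h1 : c * chebA c n k ≤ chebA c (n+1) (k-1) := by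
        have := (hG (k-1)).2
        simpa using this
      nlinarith [hnn0 k, hnn1 (k-1), hnn1 (k+1)]

lemma sum_Icc_shift (f : ℤ → ℝ) (a b d : ℤ) :
    ∑ k ∈ Icc a b, f (k + d) = ∑ k ∈ Icc (a+d) (b+d), f k := by
  rw [← map_add_right_Icc, Finset.sum_map]
  rfl

/-- Extend a sum over `Icc` to a bigger `Icc` when the coefficients vanish outside. -/
lemma sum_Icc_extend {c : ℝ} {n : ℕ} (hS : SuppP c n) (g : ℤ → ℝ) (a b : ℤ)
    (ha : a ≤ -(n:ℤ)) (hb : (n:ℤ) ≤ b) :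
    ∑ k ∈ Icc (-(n:ℤ)) (n:ℤ), chebA c n k * g k = ∑ k ∈ Icc a b, chebA c n k * g k := by
  apply Finset.sum_subset
  · intro k hk
    simp only [Finset.mem_Icc] at hk ⊢
    omega
  · intro k _ hk
    simp only [Finset.mem_Icc, not_and_or, not_le] at hk
    rw [hS k (by omega), zero_mul]

lemma chebA_eval (c : ℝ) (hc : 1 < c) :
    ∀ n : ℕ, ∀ x : ℝ, x ≠ 0 →
      (Polynomial.Chebyshev.U ℝ n).eval (c * (x + x⁻¹) / 2)
        = ∑ k ∈ Icc (-(n:ℤ)) (n:ℤ), chebA c n k * x ^ k := by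
  have key : ∀ n : ℕ, (∀ x : ℝ, x ≠ 0 →
      (Polynomial.Chebyshev.U ℝ n).eval (c * (x + x⁻¹) / 2)
        = ∑ k ∈ Icc (-(n:ℤ)) (n:ℤ), chebA c n k * x ^ k) ∧
      (∀ x : ℝ, x ≠ 0 →
      (Polynomial.Chebyshev.U ℝ (n+1)).eval (c * (x + x⁻¹) / 2)
        = ∑ k ∈ Icc (-((n:ℤ)+1)) ((n:ℤ)+1), chebA c (n+1) k * x ^ k) := by
    intro n
    induction n with
    | zero =>
      constructor
      · intro x hx
        have h01 : Finset.Icc (-(0:ℤ)) (0:ℤ) = {0} := by decide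
        simp [Polynomial.Chebyshev.U_zero, h01, chebA]
      · intro x hx
        have h11 : Finset.Icc (-1:ℤ) 1 = {-1, 0, 1} := by decide
        have hb : (-((0:ℤ)+1)) = -1 := by norm_num
        simp only [Nat.cast_zero, zero_add, hb, h11]
        rw [Finset.sum_insert (by decide), Finset.sum_insert (by decide), Finset.sum_singleton]
        rw [Polynomial.Chebyshev.U_one]
        simp only [chebA]
        norm_num
        field_simp
        ring
    | succ n ih =>
      obtain ⟨ih0, ih1⟩ := ih
      refine ⟨ih1, ?_⟩
      intro x hx
      have hU := Polynomial.Chebyshev.U_add_two ℝ (n:ℤ)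
      have hmain := chebA_main c hc n
      have hS0 : SuppP c n := hmain.1.1
      have hS1 : SuppP c (n+1) := hmain.2.1.1
      have hcast : ((n:ℕ)+1+1 : ℤ) = (n:ℤ) + 2 := by push_cast; ring
      rw [show (((n:ℕ)+1 : ℕ) : ℤ) = (n:ℤ)+1 by push_cast; ring]
      rw [show ((n:ℤ)+1+1) = (n:ℤ)+2 by ring, hU]
      rw [Polynomial.eval_sub, Polynomial.eval_mul, Polynomial.eval_mul,
        Polynomial.eval_ofNat, Polynomial.eval_X]
      rw [ih1 x hx, ih0 x hx]
      -- Now pure sum manipulation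
      have hxy : (2 : ℝ) * (c * (x + x⁻¹) / 2) = c * (x + x⁻¹) := by ring
      rw [hxy]
      -- expand product
      have expand : c * (x + x⁻¹) * ∑ k ∈ Icc (-((n:ℤ)+1)) ((n:ℤ)+1), chebA c (n+1) k * x ^ k
          = (∑ k ∈ Icc (-((n:ℤ)+1)) ((n:ℤ)+1), c * chebA c (n+1) k * x ^ (k+1))
            + ∑ k ∈ Icc (-((n:ℤ)+1)) ((n:ℤ)+1), c * chebA c (n+1) k * x ^ (k-1) := by
        rw [Finset.mul_sum, ← Finset.sum_add_distrib]
        refine Finset.sum_congr rfl fun k _ => ?_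
        rw [zpow_add_one₀ hx, zpow_sub_one₀ hx]
        ring
      rw [expand]
      -- shift the two sums
      have shift1 : ∑ k ∈ Icc (-((n:ℤ)+1)) ((n:ℤ)+1), c * chebA c (n+1) k * x ^ (k+1)
          = ∑ k ∈ Icc (-((n:ℤ)+1)+1) (((n:ℤ)+1)+1), c * chebA c (n+1) (k-1) * x ^ k := by
        rw [← sum_Icc_shift (fun k => c * chebA c (n+1) (k-1) * x ^ k) _ _ 1]
        refine Finset.sum_congr rfl fun k _ => ?_
        norm_num
      have shift2 : ∑ k ∈ Icc (-((n:ℤ)+1)) ((n:ℤ)+1), c * chebA c (n+1) k * x ^ (k-1)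
          = ∑ k ∈ Icc (-((n:ℤ)+1)+ -1) (((n:ℤ)+1)+ -1), c * chebA c (n+1) (k+1) * x ^ k := by
        rw [← sum_Icc_shift (fun k => c * chebA c (n+1) (k+1) * x ^ k) _ _ (-1)]
        refine Finset.sum_congr rfl fun k _ => ?_
        rw [show k + -1 + 1 = k by ring, show k + -1 = k - 1 by ring]
      rw [shift1, shift2]
      -- extend all sums to Icc (-(n+2)) (n+2)
      have E1 : ∑ k ∈ Icc (-((n:ℤ)+1)+1) (((n:ℤ)+1)+1), c * chebA c (n+1) (k-1) * x ^ k
          = ∑ k ∈ Icc (-((n:ℤ)+2)) ((n:ℤ)+2), c * chebA c (n+1) (k-1) * x ^ k := by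
        apply Finset.sum_subset
        · intro k hk; simp only [Finset.mem_Icc] at hk ⊢; omega
        · intro k _ hk
          simp only [Finset.mem_Icc, not_and_or, not_le] at hk
          rw [hS1 (k-1) (by push_cast; omega)]
          ring
      have E2 : ∑ k ∈ Icc (-((n:ℤ)+1)+ -1) (((n:ℤ)+1)+ -1), c * chebA c (n+1) (k+1) * x ^ k
          = ∑ k ∈ Icc (-((n:ℤ)+2)) ((n:ℤ)+2), c * chebA c (n+1) (k+1) * x ^ k := by
        apply Finset.sum_subset
        · intro k hk; simp only [Finset.mem_Icc] at hk ⊢; omega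
        · intro k _ hk
          simp only [Finset.mem_Icc, not_and_or, not_le] at hk
          rw [hS1 (k+1) (by push_cast; omega)]
          ring
      have E0 : ∑ k ∈ Icc (-(n:ℤ)) (n:ℤ), chebA c n k * x ^ k
          = ∑ k ∈ Icc (-((n:ℤ)+2)) ((n:ℤ)+2), chebA c n k * x ^ k :=
        sum_Icc_extend hS0 (fun k => x ^ k) _ _ (by omega) (by omega)
      rw [E1, E2, E0]
      rw [← Finset.sum_add_distrib, ← Finset.sum_sub_distrib]
      refine Finset.sum_congr rfl fun k _ => ?_
      rw [show n+1+1 = n+2 from rfl, chebA_add_two]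
      ring
  intro n
  exact (key n).1

/-- Let `c > 1`.  In the Laurent polynomial `U_n(c(x+1/x)/2)`, the coefficient of
`x^k` is strictly positive for every `k ≡ n (mod 2)` with `-n ≤ k ≤ n`, and all
the other coefficients vanish. -/
theorem chebyshev_U_laurent_coeffs_pos (n : ℕ) (c : ℝ) (hc : 1 < c) :
    ∃ a : ℤ → ℝ, IsLaurentCoeffs n (Polynomial.Chebyshev.U ℝ n) c a ∧
      ∀ k : ℤ,
        ((-(n : ℤ) ≤ k ∧ k ≤ (n : ℤ) ∧ k % 2 = (n : ℤ) % 2) → 0 < a k) ∧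
        (¬(-(n : ℤ) ≤ k ∧ k ≤ (n : ℤ) ∧ k % 2 = (n : ℤ) % 2) → a k = 0) := by
  obtain ⟨⟨hS, hP⟩, _⟩ := chebA_main c hc n
  refine ⟨chebA c n, ⟨?_, chebA_eval c hc n⟩, ?_⟩
  · intro k hk
    exact hS k (by omega)
  · intro k
    refine ⟨fun h => hP k h.1 h.2.1 h.2.2, fun h => hS k (by omega)⟩
end

section
/- Let c > 1 be real. Then every coefficient of the Laurent polynomial T_n(c(x+1/x)/2) is nonnegative, and the coefficient of x^k is strictly positive whenever k ≡ n (mod 2) with -n ≤ k ≤ n. -/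
open Polynomial Finset

def lam : ℕ → ℕ → ℕ → ℕ
  | p, q, 0 => (if p = 0 then 1 else 0) + (if q = 0 then 1 else 0)
  | _, 0, _+1 => 0
  | p, q+1, j+1 => (q+1).choose (j+1) * (p+j).choose j + q.choose j * (p+j).choose (j+1)

lemma lam_key (P Q j : ℕ) :
    lam (P+1) (Q+1) (j+1) + lam P Q (j+1)
      = lam P (Q+1) (j+1) + lam (P+1) Q (j+1) + lam (P+1) Q j := by
  match Q, j with
  | 0, 0 => simp [lam]; ring
  | 0, J+1 =>
    simp only [lam]
    have h1 : Nat.choose 1 (J+2) = 0 := Nat.choose_eq_zero_of_lt (by omega)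
    have h2 : Nat.choose 0 (J+1) = 0 := Nat.choose_eq_zero_of_lt (by omega)
    simp [h1, h2]
  | q+1, 0 => simp only [lam]; simp [Nat.choose_one_right]; ring
  | q+1, J+1 =>
    simp only [lam]
    have hn : P + 1 + J = P + (J+1) := by omega
    rw [hn]
    have e1 : (q+1+1).choose (J+1+1) = (q+1).choose (J+1) + (q+1).choose (J+1+1) :=
      Nat.choose_succ_succ (q+1) (J+1)
    have e2 : (q+1).choose (J+1+1) = q.choose (J+1) + q.choose (J+1+1) :=
      Nat.choose_succ_succ q (J+1)
    have e3 : (q+1).choose (J+1) = q.choose J + q.choose (J+1) :=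
      Nat.choose_succ_succ q J
    have e4 : (P+1+(J+1)).choose (J+1) = (P+(J+1)).choose J + (P+(J+1)).choose (J+1) := by
      have := Nat.choose_succ_succ (P+(J+1)) J
      convert this using 2 <;> omega
    have e5 : (P+1+(J+1)).choose (J+1+1) = (P+(J+1)).choose (J+1) + (P+(J+1)).choose (J+1+1) := by
      have := Nat.choose_succ_succ (P+(J+1)) (J+1)
      convert this using 2 <;> omega
    rw [e1, e2, e3, e4, e5]
    ring

lemma lam_top (p q : ℕ) : lam p q (q+1) = 0 := by
  match q with
  | 0 => rfl
  | q+1 =>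
    simp only [lam]
    rw [Nat.choose_eq_zero_of_lt (show q+1 < q+2 by omega),
      Nat.choose_eq_zero_of_lt (show q < q+1 by omega)]
    simp

lemma lam_zero_add (P Q : ℕ) :
    lam (P+1) (Q+1) 0 + lam P Q 0 = lam P (Q+1) 0 + lam (P+1) Q 0 := by
  simp only [lam]
  split_ifs <;> omega

/-- `P(p,q)(X) = ∑ᵢ λ(p,q,i) Xⁱ` evaluated at `X = c² - 1`. -/
noncomputable def Pp (c : ℝ) (p q : ℕ) : ℝ :=
  ∑ i ∈ Finset.range (q+1), (lam p q i : ℝ) * (c^2-1)^i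

lemma Pp_rec (c : ℝ) (P Q : ℕ) :
    Pp c (P+1) (Q+1) + Pp c P Q = Pp c P (Q+1) + c^2 * Pp c (P+1) Q := by
  set X : ℝ := c^2 - 1 with hX
  have hc2 : c^2 = X + 1 := by rw [hX]; ring
  have peel : ∀ f : ℕ → ℝ, (∑ i ∈ Finset.range (Q+2), f i * X^i)
      = (∑ i ∈ Finset.range (Q+1), f (i+1) * X^(i+1)) + f 0 := by
    intro f
    rw [Finset.sum_range_succ' (fun i => f i * X^i) (Q+1)]
    simp
  have ext : ∀ f : ℕ → ℝ, f (Q+1) = 0 →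
      (∑ i ∈ Finset.range (Q+1), f i * X^i) = ∑ i ∈ Finset.range (Q+2), f i * X^i := by
    intro f hf
    rw [Finset.sum_range_succ (fun i => f i * X^i) (Q+1), hf]
    simp
  have h1 : Pp c (P+1) (Q+1)
      = (∑ i ∈ Finset.range (Q+1), (lam (P+1) (Q+1) (i+1) : ℝ) * X^(i+1))
        + (lam (P+1) (Q+1) 0 : ℝ) := by
    unfold Pp; rw [← hX, show Q+1+1 = Q+2 from rfl]
    exact peel _
  have h3 : Pp c P (Q+1)
      = (∑ i ∈ Finset.range (Q+1), (lam P (Q+1) (i+1) : ℝ) * X^(i+1))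
        + (lam P (Q+1) 0 : ℝ) := by
    unfold Pp; rw [← hX, show Q+1+1 = Q+2 from rfl]
    exact peel _
  have h2 : Pp c P Q
      = (∑ i ∈ Finset.range (Q+1), (lam P Q (i+1) : ℝ) * X^(i+1)) + (lam P Q 0 : ℝ) := by
    unfold Pp; rw [← hX]
    rw [ext (fun i => (lam P Q i : ℝ)) (by simp [lam_top])]
    exact peel _
  have h4 : c^2 * Pp c (P+1) Q
      = (∑ i ∈ Finset.range (Q+1), (lam (P+1) Q i : ℝ) * X^(i+1))
        + ((∑ i ∈ Finset.range (Q+1), (lam (P+1) Q (i+1) : ℝ) * X^(i+1))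
            + (lam (P+1) Q 0 : ℝ)) := by
    unfold Pp; rw [← hX, hc2]
    have hS : (∑ i ∈ Finset.range (Q+1), (lam (P+1) Q i : ℝ) * X^i)
        = (∑ i ∈ Finset.range (Q+1), (lam (P+1) Q (i+1) : ℝ) * X^(i+1))
          + (lam (P+1) Q 0 : ℝ) := by
      rw [ext (fun i => (lam (P+1) Q i : ℝ)) (by simp [lam_top])]
      exact peel _
    have hXS : X * (∑ i ∈ Finset.range (Q+1), (lam (P+1) Q i : ℝ) * X^i)
        = ∑ i ∈ Finset.range (Q+1), (lam (P+1) Q i : ℝ) * X^(i+1) := by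
      rw [Finset.mul_sum]
      exact Finset.sum_congr rfl fun i _ => by ring
    calc (X+1) * (∑ i ∈ Finset.range (Q+1), (lam (P+1) Q i : ℝ) * X^i)
        = X * (∑ i ∈ Finset.range (Q+1), (lam (P+1) Q i : ℝ) * X^i)
          + (∑ i ∈ Finset.range (Q+1), (lam (P+1) Q i : ℝ) * X^i) := by ring
      _ = _ := by rw [hXS, hS]
  have hsum : (∑ i ∈ Finset.range (Q+1), (lam (P+1) (Q+1) (i+1) : ℝ) * X^(i+1))
      + (∑ i ∈ Finset.range (Q+1), (lam P Q (i+1) : ℝ) * X^(i+1))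
      = (∑ i ∈ Finset.range (Q+1), (lam P (Q+1) (i+1) : ℝ) * X^(i+1))
        + ((∑ i ∈ Finset.range (Q+1), (lam (P+1) Q i : ℝ) * X^(i+1))
          + (∑ i ∈ Finset.range (Q+1), (lam (P+1) Q (i+1) : ℝ) * X^(i+1))) := by
    rw [← Finset.sum_add_distrib, ← Finset.sum_add_distrib, ← Finset.sum_add_distrib]
    refine Finset.sum_congr rfl fun i _ => ?_
    have hk := lam_key P Q i
    have hkast : ((lam (P+1) (Q+1) (i+1) : ℝ) + lam P Q (i+1))
        = (lam P (Q+1) (i+1) : ℝ) + lam (P+1) Q (i+1) + lam (P+1) Q i := by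
      exact_mod_cast congrArg (Nat.cast : ℕ → ℝ) hk
    linear_combination hkast * X^(i+1)
  have hconst : (lam (P+1) (Q+1) 0 : ℝ) + lam P Q 0 = (lam P (Q+1) 0 : ℝ) + lam (P+1) Q 0 := by
    exact_mod_cast congrArg (Nat.cast : ℕ → ℝ) (lam_zero_add P Q)
  rw [h1, h2, h3, h4]
  linear_combination hsum + hconst

lemma lam_left (m i : ℕ) (hm : m ≠ 0) : lam 0 m i = m.choose i := by
  match m, i with
  | m+1, 0 => simp [lam]
  | m+1, j+1 =>
    simp only [lam]
    simp [Nat.choose_succ_self]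

lemma Pp_left (c : ℝ) (m : ℕ) (hm : m ≠ 0) : Pp c 0 m = (c^2)^m := by
  unfold Pp
  have : ∀ i ∈ Finset.range (m+1), (lam 0 m i : ℝ) * (c^2-1)^i
      = (c^2-1)^i * 1^(m-i) * (m.choose i : ℝ) := by
    intro i _
    rw [lam_left m i hm]
    ring
  rw [Finset.sum_congr rfl this, ← add_pow (c^2-1) 1 m]
  ring_nf

lemma Pp_right (c : ℝ) (p : ℕ) (hp : p ≠ 0) : Pp c p 0 = 1 := by
  unfold Pp
  simp [lam, hp]

lemma Pp_zero (c : ℝ) : Pp c 0 0 = 2 := by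
  unfold Pp
  simp [lam]

/-- The `k`-th Laurent coefficient of `T_n(c(x+1/x)/2)`. -/
noncomputable def acoef (n : ℕ) (c : ℝ) (k : ℤ) : ℝ :=
  if k % 2 = (n : ℤ) % 2 ∧ -(n : ℤ) ≤ k ∧ k ≤ (n : ℤ) then
    c ^ k * Pp c (((n : ℤ) + k).toNat / 2) (((n : ℤ) - k).toNat / 2) / 2
  else 0

lemma acoef_rec (n : ℕ) (c : ℝ) (hc : c ≠ 0) (k : ℤ) :
    acoef (n+2) c k = c * acoef (n+1) c (k-1) + c * acoef (n+1) c (k+1) - acoef n c k := by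
  unfold acoef
  push_cast
  by_cases hpar : k % 2 = ((n : ℤ) + 2) % 2
  · by_cases hhi : ((n : ℤ) + 2) < k
    · rw [if_neg (by omega), if_neg (by omega), if_neg (by omega), if_neg (by omega)]
      ring
    · by_cases hlo : k < -((n : ℤ) + 2)
      · rw [if_neg (by omega), if_neg (by omega), if_neg (by omega), if_neg (by omega)]
        ring
      · by_cases htop : k = (n : ℤ) + 2
        · subst htop
          rw [if_pos (by omega), if_pos (by omega), if_neg (by omega), if_neg (by omega)]
          have e1 : (((n:ℤ) + 2 + ((n:ℤ)+2)).toNat / 2) = n + 2 := by omega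
          have e2 : (((n:ℤ) + 2 - ((n:ℤ)+2)).toNat / 2) = 0 := by omega
          have e3 : (((n:ℤ) + 1 + ((n:ℤ)+2-1)).toNat / 2) = n + 1 := by omega
          have e4 : (((n:ℤ) + 1 - ((n:ℤ)+2-1)).toNat / 2) = 0 := by omega
          rw [e1, e2, e3, e4, Pp_right c (n+2) (by omega), Pp_right c (n+1) (by omega)]
          have hz : c * c ^ ((n:ℤ)+2-1) = c ^ ((n:ℤ)+2) := by
            rw [mul_comm, ← zpow_add_one₀ hc]
            norm_num
          rw [← hz]
          ring
        · by_cases hbot : k = -((n : ℤ) + 2)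
          · subst hbot
            rw [if_pos (by omega), if_neg (by omega), if_pos (by omega), if_neg (by omega)]
            have e1 : (((n:ℤ) + 2 + -((n:ℤ)+2)).toNat / 2) = 0 := by omega
            have e2 : (((n:ℤ) + 2 - -((n:ℤ)+2)).toNat / 2) = n + 2 := by omega
            have e3 : (((n:ℤ) + 1 + (-((n:ℤ)+2)+1)).toNat / 2) = 0 := by omega
            have e4 : (((n:ℤ) + 1 - (-((n:ℤ)+2)+1)).toNat / 2) = n + 1 := by omega
            rw [e1, e2, e3, e4, Pp_left c (n+2) (by omega), Pp_left c (n+1) (by omega)]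
            have hz : c ^ (-((n:ℤ)+2)+1) = c ^ (-((n:ℤ)+2)) * c := zpow_add_one₀ hc _
            rw [hz]
            ring
          · -- interior case
            obtain ⟨P, hP⟩ : ∃ P : ℕ, (n:ℤ) + 2 + k = 2*((P:ℤ)+1) := by
              refine ⟨((n:ℤ) + k).toNat / 2, by omega⟩
            obtain ⟨Q, hQ⟩ : ∃ Q : ℕ, (n:ℤ) + 2 - k = 2*((Q:ℤ)+1) := by
              refine ⟨((n:ℤ) - k).toNat / 2, by omega⟩
            rw [if_pos (by omega), if_pos (by omega), if_pos (by omega), if_pos (by omega)]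
            have e1 : (((n:ℤ) + 2 + k).toNat / 2) = P + 1 := by omega
            have e2 : (((n:ℤ) + 2 - k).toNat / 2) = Q + 1 := by omega
            have e3 : (((n:ℤ) + 1 + (k-1)).toNat / 2) = P := by omega
            have e4 : (((n:ℤ) + 1 - (k-1)).toNat / 2) = Q + 1 := by omega
            have e5 : (((n:ℤ) + 1 + (k+1)).toNat / 2) = P + 1 := by omega
            have e6 : (((n:ℤ) + 1 - (k+1)).toNat / 2) = Q := by omega
            have e7 : (((n:ℤ) + k).toNat / 2) = P := by omega
            have e8 : (((n:ℤ) - k).toNat / 2) = Q := by omega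
            rw [e1, e2, e3, e4, e5, e6, e7, e8]
            have h1 : c ^ (k-1) = c ^ k / c := by
              rw [zpow_sub_one₀ hc]; ring
            have h2 : c ^ (k+1) = c ^ k * c := zpow_add_one₀ hc k
            rw [h1, h2]
            have hrec := Pp_rec c P Q
            have ha : c * (c ^ k / c * Pp c P (Q+1) / 2) = c ^ k * Pp c P (Q+1) / 2 := by
              field_simp
            have hb : c * (c ^ k * c * Pp c (P+1) Q / 2)
                = c ^ k * (c ^ 2 * Pp c (P+1) Q) / 2 := by ring
            rw [ha, hb]
            linear_combination (c ^ k / 2) * hrec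
  · rw [if_neg (by omega), if_neg (by omega), if_neg (by omega), if_neg (by omega)]
    ring

lemma acoef_support (n : ℕ) (c : ℝ) (k : ℤ) (h : k < -(n:ℤ) ∨ (n:ℤ) < k) :
    acoef n c k = 0 := by
  unfold acoef
  rw [if_neg]
  rintro ⟨-, h1, h2⟩
  omega

lemma shift_sum (f : ℤ → ℝ) (a b d : ℤ) :
    ∑ k ∈ Finset.Icc a b, f (k - d) = ∑ j ∈ Finset.Icc (a - d) (b - d), f j := by
  rw [show Finset.Icc a b = (Finset.Icc (a-d) (b-d)).map (addRightEmbedding d) by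
    rw [Finset.map_add_right_Icc]; congr 1 <;> ring]
  rw [Finset.sum_map]
  apply Finset.sum_congr rfl
  intro j _
  simp [addRightEmbedding]

lemma acoef_eval (c : ℝ) (hc : c ≠ 0) (n : ℕ) : ∀ x : ℝ, x ≠ 0 →
    (Polynomial.Chebyshev.T ℝ n).eval (c * (x + x⁻¹) / 2)
      = ∑ k ∈ Finset.Icc (-(n:ℤ)) (n:ℤ), acoef n c k * x ^ k := by
  induction n using Nat.twoStepInduction with
  | zero =>
    intro x hx
    have h0 : ((0:ℕ):ℤ) = 0 := rfl
    rw [h0]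
    simp only [Polynomial.Chebyshev.T_zero, Polynomial.eval_one, neg_zero,
      Finset.Icc_self, Finset.sum_singleton]
    unfold acoef
    rw [if_pos (by omega)]
    norm_num [Pp_zero]
  | one =>
    intro x hx
    have h1 : ((1:ℕ):ℤ) = 1 := rfl
    rw [h1]
    simp only [Polynomial.Chebyshev.T_one, Polynomial.eval_X]
    have hIcc : Finset.Icc (-1:ℤ) 1 = {-1, 0, 1} := by
      ext k
      simp only [Finset.mem_Icc, Finset.mem_insert, Finset.mem_singleton]
      omega
    rw [hIcc, Finset.sum_insert (by decide), Finset.sum_insert (by decide),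
      Finset.sum_singleton]
    have ha : acoef 1 c (-1) = c⁻¹ * c^2 / 2 := by
      unfold acoef
      rw [if_pos (by omega)]
      norm_num [show Int.toNat 2 / 2 = 1 from rfl, Pp_left c 1 one_ne_zero]
    have hb : acoef 1 c 0 = 0 := by
      unfold acoef
      rw [if_neg (by omega)]
    have hcc : acoef 1 c 1 = c / 2 := by
      unfold acoef
      rw [if_pos (by omega)]
      norm_num [show Int.toNat 2 / 2 = 1 from rfl, Pp_right c 1 one_ne_zero]
    rw [ha, hb, hcc]
    rw [zpow_neg_one, zpow_one]
    field_simp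
    ring
  | more n IH0 IH1 =>
    intro x hx
    have hcast : ((n+2:ℕ):ℤ) = (n:ℤ) + 2 := by push_cast; ring
    have hcast1 : ((n+1:ℕ):ℤ) = (n:ℤ) + 1 := by push_cast; ring
    rw [hcast, Polynomial.Chebyshev.T_add_two]
    simp only [Polynomial.eval_sub, Polynomial.eval_mul, Polynomial.eval_ofNat,
      Polynomial.eval_X]
    have hT1 : (Polynomial.Chebyshev.T ℝ ((n:ℤ)+1)).eval (c * (x + x⁻¹) / 2)
        = ∑ k ∈ Finset.Icc (-((n:ℤ)+1)) ((n:ℤ)+1), acoef (n+1) c k * x ^ k := by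
      have := IH1 x hx
      rw [hcast1] at this
      exact this
    have hT0 : (Polynomial.Chebyshev.T ℝ (n:ℤ)).eval (c * (x + x⁻¹) / 2)
        = ∑ k ∈ Finset.Icc (-(n:ℤ)) (n:ℤ), acoef n c k * x ^ k := by
      exact IH0 x hx
    rw [hT1, hT0]
    -- now expand the LHS sum using the recurrence
    have hrec : ∀ k ∈ Finset.Icc (-((n:ℤ)+2)) ((n:ℤ)+2),
        acoef (n+2) c k * x ^ k
          = c * acoef (n+1) c (k-1) * x ^ k + c * acoef (n+1) c (k+1) * x ^ k
            - acoef n c k * x ^ k := by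
      intro k _
      rw [acoef_rec n c hc k]
      ring
    rw [Finset.sum_congr rfl hrec]
    rw [Finset.sum_sub_distrib, Finset.sum_add_distrib]
    -- term A
    have hA : (∑ k ∈ Finset.Icc (-((n:ℤ)+2)) ((n:ℤ)+2), c * acoef (n+1) c (k-1) * x ^ k)
        = c * x * ∑ j ∈ Finset.Icc (-((n:ℤ)+1)) ((n:ℤ)+1), acoef (n+1) c j * x ^ j := by
      have step1 : (∑ k ∈ Finset.Icc (-((n:ℤ)+2)) ((n:ℤ)+2),
          c * acoef (n+1) c (k-1) * x ^ k)
          = ∑ k ∈ Finset.Icc (-((n:ℤ)+2)) ((n:ℤ)+2),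
              (fun j => c * x * (acoef (n+1) c j * x ^ j)) (k - 1) := by
        apply Finset.sum_congr rfl
        intro k _
        have : x ^ k = x ^ (k-1) * x := by
          rw [← zpow_add_one₀ hx (k-1)]; norm_num
        rw [this]
        ring
      rw [step1, shift_sum (fun j => c * x * (acoef (n+1) c j * x ^ j)) _ _ 1]
      rw [Finset.mul_sum]
      symm
      apply Finset.sum_subset
      · intro j hj
        simp only [Finset.mem_Icc] at hj ⊢
        omega
      · intro j _ hj
        simp only [Finset.mem_Icc] at hj
        rw [acoef_support (n+1) c j (by push_cast; omega)]
        ring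
    -- term B
    have hB : (∑ k ∈ Finset.Icc (-((n:ℤ)+2)) ((n:ℤ)+2), c * acoef (n+1) c (k+1) * x ^ k)
        = c * x⁻¹ * ∑ j ∈ Finset.Icc (-((n:ℤ)+1)) ((n:ℤ)+1), acoef (n+1) c j * x ^ j := by
      have step1 : (∑ k ∈ Finset.Icc (-((n:ℤ)+2)) ((n:ℤ)+2),
          c * acoef (n+1) c (k+1) * x ^ k)
          = ∑ k ∈ Finset.Icc (-((n:ℤ)+2)) ((n:ℤ)+2),
              (fun j => c * x⁻¹ * (acoef (n+1) c j * x ^ j)) (k - (-1)) := by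
        apply Finset.sum_congr rfl
        intro k _
        simp only [sub_neg_eq_add]
        have : x ^ (k+1) = x ^ k * x := zpow_add_one₀ hx k
        rw [this]
        field_simp
      rw [step1, shift_sum (fun j => c * x⁻¹ * (acoef (n+1) c j * x ^ j)) _ _ (-1)]
      rw [Finset.mul_sum]
      symm
      apply Finset.sum_subset
      · intro j hj
        simp only [Finset.mem_Icc] at hj ⊢
        omega
      · intro j _ hj
        simp only [Finset.mem_Icc] at hj
        rw [acoef_support (n+1) c j (by push_cast; omega)]
        ring
    -- term C
    have hC : (∑ k ∈ Finset.Icc (-((n:ℤ)+2)) ((n:ℤ)+2), acoef n c k * x ^ k)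
        = ∑ k ∈ Finset.Icc (-(n:ℤ)) (n:ℤ), acoef n c k * x ^ k := by
      symm
      apply Finset.sum_subset
      · intro j hj
        simp only [Finset.mem_Icc] at hj ⊢
        omega
      · intro j _ hj
        simp only [Finset.mem_Icc] at hj
        rw [acoef_support n c j (by omega)]
        ring
    rw [hA, hB, hC]
    ring

lemma Pp_nonneg (c : ℝ) (hc : 1 < c) (p q : ℕ) : 0 ≤ Pp c p q := by
  have hX : (0:ℝ) < c^2 - 1 := by nlinarith
  unfold Pp
  apply Finset.sum_nonneg
  intro i _
  have := (lam p q i).cast_nonneg (α := ℝ)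
  positivity

lemma Pp_pos (c : ℝ) (hc : 1 < c) (p q : ℕ) : 0 < Pp c p q := by
  have hX : (0:ℝ) < c^2 - 1 := by nlinarith
  unfold Pp
  apply Finset.sum_pos'
  · intro i _
    have := (lam p q i).cast_nonneg (α := ℝ)
    positivity
  · match q with
    | 0 =>
      refine ⟨0, by simp, ?_⟩
      match p with
      | 0 => norm_num [lam]
      | p+1 => norm_num [lam]
    | q+1 =>
      refine ⟨1, by simp, ?_⟩
      have h1 : lam p (q+1) 1 = (q+1) + p := by
        simp [lam, Nat.choose_one_right]
      rw [h1]
      have : (0:ℝ) < ((q+1+p : ℕ) : ℝ) := by positivity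
      positivity

/-- Let `c > 1`.  Every coefficient of the Laurent polynomial `T_n(c(x+1/x)/2)` is
nonnegative, and the coefficient of `x^k` is strictly positive whenever
`k ≡ n (mod 2)` with `-n ≤ k ≤ n`. -/
theorem chebyshev_T_laurent_coeffs_nonneg (n : ℕ) (c : ℝ) (hc : 1 < c) :
    ∃ a : ℤ → ℝ, IsLaurentCoeffs n (Polynomial.Chebyshev.T ℝ n) c a ∧
      (∀ k : ℤ, 0 ≤ a k) ∧
      ∀ k : ℤ, -(n : ℤ) ≤ k → k ≤ (n : ℤ) → k % 2 = (n : ℤ) % 2 → 0 < a k := by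
  have hc0 : (0:ℝ) < c := by linarith
  have hcne : c ≠ 0 := ne_of_gt hc0
  refine ⟨acoef n c, ⟨fun k hk => acoef_support n c k hk, fun x hx => acoef_eval c hcne n x hx⟩,
    ?_, ?_⟩
  · intro k
    unfold acoef
    split_ifs with h
    · have h1 : (0:ℝ) < c ^ k := zpow_pos hc0 k
      have h2 := Pp_nonneg c hc (((n:ℤ) + k).toNat / 2) (((n:ℤ) - k).toNat / 2)
      positivity
    · exact le_refl 0
  · intro k h1 h2 h3
    unfold acoef
    rw [if_pos ⟨h3, h1, h2⟩]
    have hz : (0:ℝ) < c ^ k := zpow_pos hc0 k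
    have hp := Pp_pos c hc (((n:ℤ) + k).toNat / 2) (((n:ℤ) - k).toNat / 2)
    positivity
end

section
/- Let G be a finite r-regular undirected graph and let L(G) be its directed line graph (vertices are the 2|E(G)| oriented edges; there is an arc from e to f iff head(e)=tail(f) and f is not the reversal of e). Let A be the adjacency matrix of L(G). Then AᵀA = I + (r-2)·B, where B is the block-diagonal matrix whose blocks, one for each vertex v of G, are the r×r all-ones matrices indexed by the oriented edges with tail v. Consequently, the eigenvalues of AᵀA are (r-1)² with multiplicity |V(G)| and 1 with multiplicity 2|E(G)| - |V(G)|. -/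
open Polynomial Matrix Finset

lemma det_one_sub_ones' {α : Type*} [Fintype α] [DecidableEq α] (t : ℝ) :
    ((1 : Matrix α α ℝ) - t • Matrix.of (fun _ _ => (1:ℝ))).det = 1 - (Fintype.card α) * t := by
  have h : (1 : Matrix α α ℝ) - t • Matrix.of (fun _ _ => (1:ℝ))
      = 1 + Matrix.replicateCol Unit (fun _ : α => -t) * Matrix.replicateRow Unit (fun _ : α => (1:ℝ)) := by
    ext i j
    simp [Matrix.mul_apply, sub_eq_add_neg]
  rw [h, Matrix.det_one_add_replicateCol_mul_replicateRow]
  simp [dotProduct]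
  ring

lemma eval_charpoly' {α : Type*} [Fintype α] [DecidableEq α] (M : Matrix α α ℝ) (x : ℝ) :
    M.charpoly.eval x = ((x • (1 : Matrix α α ℝ)) - M).det := by
  rw [Matrix.charpoly, ← Polynomial.coe_evalRingHom, RingHom.map_det]
  congr 1
  ext i j
  simp [charmatrix_apply, Matrix.diagonal_apply, Matrix.one_apply, apply_ite]

lemma charpoly_one_add_smul_ones' {α : Type*} [Fintype α] [DecidableEq α]
    (hn : 1 ≤ Fintype.card α) (c : ℝ) :
    ((1 : Matrix α α ℝ) + c • Matrix.of (fun _ _ => (1:ℝ))).charpoly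
      = (X - C (1 + c * (Fintype.card α))) * (X - C 1) ^ (Fintype.card α - 1) := by
  set n := Fintype.card α with hn'
  apply Polynomial.eq_of_infinite_eval_eq
  apply Set.Infinite.mono (s := {x : ℝ | x ≠ 1})
  · intro x hx
    have hx1 : x - 1 ≠ 0 := sub_ne_zero.mpr hx
    have key : x • (1 : Matrix α α ℝ) - (1 + c • Matrix.of (fun _ _ => (1:ℝ)))
        = (x - 1) • ((1 : Matrix α α ℝ) - (c / (x - 1)) • Matrix.of (fun _ _ => (1:ℝ))) := by
      rw [smul_sub, smul_smul, mul_div_cancel₀ _ hx1, sub_smul, one_smul]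
      abel
    simp only [Set.mem_setOf_eq, eval_charpoly', key, Matrix.det_smul, det_one_sub_ones',
      eval_mul, eval_pow, eval_sub, eval_X, eval_C, eval_one]
    have hpow : (x - 1) ^ n = (x - 1) ^ (n - 1) * (x - 1) := by
      rw [← pow_succ, Nat.sub_add_cancel hn]
    rw [hpow]
    have hkey : (x - 1) * (1 - (n : ℝ) * (c / (x - 1))) = x - (1 + c * n) := by
      field_simp
      ring
    rw [mul_assoc, hkey]
    ring
  · exact Set.Finite.infinite_compl (Set.finite_singleton 1)

lemma charmatrix_blockDiagonal' {o m : Type*} [Fintype o] [DecidableEq o] [Fintype m]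
    [DecidableEq m] {R : Type*} [CommRing R] (M : o → Matrix m m R) :
    charmatrix (blockDiagonal M) = blockDiagonal (fun k => charmatrix (M k)) := by
  ext ⟨i, v⟩ ⟨j, w⟩
  by_cases h : v = w
  · subst h
    simp [charmatrix_apply, Matrix.blockDiagonal_apply, Matrix.diagonal_apply, Prod.ext_iff]
  · simp [charmatrix_apply, Matrix.blockDiagonal_apply, Matrix.diagonal_apply, Prod.ext_iff, h]

lemma charpoly_blockDiagonal'' {o m : Type*} [Fintype o] [DecidableEq o] [Fintype m]
    [DecidableEq m] {R : Type*} [CommRing R] (M : o → Matrix m m R) :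
    (blockDiagonal M).charpoly = ∏ k, (M k).charpoly := by
  rw [Matrix.charpoly, charmatrix_blockDiagonal', Matrix.det_blockDiagonal]
  rfl

/-- Let `G` be a finite `r`-regular undirected graph (`r ≥ 2`) and let `L(G)` be its
directed line graph: vertices are the oriented edges (darts) of `G`, with an arc
from `e` to `f` iff `head(e) = tail(f)` and `f` is not the reversal of `e`.  Let
`A` be the adjacency matrix of `L(G)`.  Then `AᵀA = I + (r-2)·B`, where `B` is the
block-diagonal matrix with `B e f = 1` iff `e` and `f` have the same tail; and
consequently the characteristic polynomial of `AᵀA` is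
`(X - (r-1)²)^{|V|} · (X - 1)^{2|E| - |V|}`. -/
theorem line_graph_AtA {V : Type*} [Fintype V] [DecidableEq V]
    (G : SimpleGraph V) [DecidableRel G.Adj]
    (r : ℕ) (hr : 2 ≤ r) (hreg : G.IsRegularOfDegree r)
    (A B : Matrix G.Dart G.Dart ℝ)
    (hA : A = Matrix.of fun e f =>
      if e.toProd.2 = f.toProd.1 ∧ f ≠ e.symm then 1 else 0)
    (hB : B = Matrix.of fun e f => if e.toProd.1 = f.toProd.1 then 1 else 0) :
    Aᵀ * A = 1 + ((r : ℝ) - 2) • B ∧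
    (Aᵀ * A).charpoly =
      (X - C (((r : ℝ) - 1) ^ 2)) ^ (Fintype.card V) *
        (X - C 1) ^ (Fintype.card G.Dart - Fintype.card V) := by
  have ss : ∀ d : G.Dart, d.symm.symm = d := fun d => d.symm_symm
  have inj : Function.Injective (SimpleGraph.Dart.symm : G.Dart → G.Dart) :=
    Function.Involutive.injective ss
  have hsnd : ∀ v : V, (univ.filter (fun d : G.Dart => d.toProd.2 = v)).card = r := by
    intro v
    have h1 := G.dart_fst_fiber_card_eq_degree v
    rw [← hreg v, ← h1]
    apply Finset.card_bij (fun d _ => d.symm)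
    · intro a ha
      simp only [mem_filter, mem_univ, true_and] at ha ⊢
      exact ha
    · intro a _ b _ h
      exact inj h
    · intro b hb
      refine ⟨b.symm, ?_, ss b⟩
      simp only [mem_filter, mem_univ, true_and] at hb ⊢
      exact hb
  have part1 : Aᵀ * A = 1 + ((r : ℝ) - 2) • B := by
    ext e f
    rw [hA, hB]
    simp only [Matrix.mul_apply, Matrix.transpose_apply, Matrix.of_apply,
      Matrix.add_apply, Matrix.one_apply, Matrix.smul_apply, smul_eq_mul]
    simp only [ite_zero_mul_ite_zero, mul_one]
    rw [Finset.sum_boole]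
    by_cases hef : e.toProd.1 = f.toProd.1
    · by_cases heq : e = f
      · subst heq
        have hset : (univ.filter fun g : G.Dart =>
            (g.toProd.2 = e.toProd.1 ∧ e ≠ g.symm) ∧ g.toProd.2 = e.toProd.1 ∧ e ≠ g.symm)
            = (univ.filter (fun d : G.Dart => d.toProd.2 = e.toProd.1)).erase e.symm := by
          ext g
          simp only [mem_filter, mem_univ, true_and, mem_erase, and_assoc]
          constructor
          · rintro ⟨h1, h2, -⟩
            exact ⟨fun hc => h2 (by rw [hc, ss]), h1⟩
          · rintro ⟨h1, h2⟩
            exact ⟨h2, fun hc => h1 (by rw [hc, ss]), h2, fun hc => h1 (by rw [hc, ss])⟩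
        rw [hset, Finset.card_erase_of_mem, hsnd]
        · simp only [if_pos rfl, if_pos hef]
          have : ((r - 1 : ℕ) : ℝ) = (r : ℝ) - 1 := by
            push_cast [Nat.cast_sub (by omega : 1 ≤ r)]; ring
          rw [this]; norm_num
          ring
        · simp only [mem_filter, mem_univ, true_and]
          rw [SimpleGraph.Dart.symm_toProd]
          rfl
      · have hsymm_ne : f.symm ≠ e.symm := fun hc => heq (inj hc).symm
        have hset : (univ.filter fun g : G.Dart =>
            (g.toProd.2 = e.toProd.1 ∧ e ≠ g.symm) ∧ g.toProd.2 = f.toProd.1 ∧ f ≠ g.symm)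
            = ((univ.filter (fun d : G.Dart => d.toProd.2 = e.toProd.1)).erase e.symm).erase
                f.symm := by
          ext g
          simp only [mem_filter, mem_univ, true_and, mem_erase, and_assoc]
          constructor
          · rintro ⟨h1, h2, h3, h4⟩
            exact ⟨fun hc => h4 (by rw [hc, ss]),
              fun hc => h2 (by rw [hc, ss]), h1⟩
          · rintro ⟨h1, h2, h3⟩
            exact ⟨h3, fun hc => h2 (by rw [hc, ss]),
              hef ▸ h3, fun hc => h1 (by rw [hc, ss])⟩
        rw [hset, Finset.card_erase_of_mem, Finset.card_erase_of_mem, hsnd]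
        · simp only [if_neg heq, if_pos hef]
          have : ((r - 1 - 1 : ℕ) : ℝ) = (r : ℝ) - 2 := by
            push_cast [Nat.cast_sub (by omega : 1 ≤ r - 1), Nat.cast_sub (by omega : 1 ≤ r)]
            ring
          rw [this]; ring
        · simp only [mem_filter, mem_univ, true_and]
          rw [SimpleGraph.Dart.symm_toProd]
          rfl
        · simp only [mem_erase, mem_filter, mem_univ, true_and]
          refine ⟨hsymm_ne, ?_⟩
          rw [SimpleGraph.Dart.symm_toProd]
          exact hef.symm
    · have hset : (univ.filter fun g : G.Dart =>
          (g.toProd.2 = e.toProd.1 ∧ e ≠ g.symm) ∧ g.toProd.2 = f.toProd.1 ∧ f ≠ g.symm) = ∅ := by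
        ext g
        simp only [mem_filter, mem_univ, true_and, notMem_empty, iff_false, not_and, and_imp]
        intro h1 _ h3 _
        exact absurd (h1 ▸ h3) (fun hc => hef hc)
      rw [hset]
      have hne : e ≠ f := fun hc => hef (congrArg (fun d : G.Dart => d.toProd.1) hc)
      simp [if_neg hne, if_neg hef]
  refine ⟨part1, ?_⟩
  -- cardinality of tail-fibers
  have hcard : ∀ v : V, Fintype.card {d : G.Dart // d.toProd.1 = v} = r := by
    intro v
    rw [Fintype.card_subtype]
    have := G.dart_fst_fiber_card_eq_degree v
    rw [this, hreg v]
  -- the reindexing equivalence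
  let E : G.Dart ≃ Fin r × V :=
    ((((Equiv.sigmaFiberEquiv (fun d : G.Dart => d.toProd.1)).symm.trans
      (Equiv.sigmaCongrRight (fun v => Fintype.equivFinOfCardEq (hcard v)))).trans
      (Equiv.sigmaEquivProd V (Fin r))).trans (Equiv.prodComm V (Fin r)))
  have hE : ∀ p : Fin r × V, (E.symm p).toProd.1 = p.2 := by
    intro p
    exact ((Fintype.equivFinOfCardEq (hcard p.2)).symm p.1).2
  -- the block matrix
  set c : ℝ := (r : ℝ) - 2 with hc
  have hreidx : Matrix.reindex E E (1 + c • B)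
      = Matrix.blockDiagonal (fun _ : V =>
          (1 : Matrix (Fin r) (Fin r) ℝ) + c • Matrix.of (fun _ _ => (1:ℝ))) := by
    ext ⟨i, v⟩ ⟨j, w⟩
    rw [Matrix.reindex_apply, Matrix.submatrix_apply, hB]
    by_cases hvw : v = w
    · subst hvw
      rw [Matrix.blockDiagonal_apply_eq]
      have h1 : (E.symm (i, v)).toProd.1 = v := hE _
      have h2 : (E.symm (j, v)).toProd.1 = v := hE _
      simp only [Matrix.add_apply, Matrix.one_apply, Matrix.smul_apply, Matrix.of_apply,
        smul_eq_mul, h1, h2, if_pos rfl, mul_one, if_true]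
      congr 1
      simp [EmbeddingLike.apply_eq_iff_eq, Prod.ext_iff]
    · rw [Matrix.blockDiagonal_apply_ne _ _ _ hvw]
      have h1 : (E.symm (i, v)).toProd.1 = v := hE _
      have h2 : (E.symm (j, w)).toProd.1 = w := hE _
      have hne : E.symm (i, v) ≠ E.symm (j, w) := by
        intro hcon
        exact hvw (h1 ▸ h2 ▸ congrArg (fun d : G.Dart => d.toProd.1) hcon)
      simp only [Matrix.add_apply, Matrix.one_apply, Matrix.smul_apply, Matrix.of_apply,
        smul_eq_mul, if_neg hne, if_neg (h1 ▸ h2 ▸ hvw), mul_zero, add_zero, mul_one]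
  have hcardDart : Fintype.card G.Dart = Fintype.card V * r := by
    rw [G.dart_card_eq_sum_degrees, Finset.sum_congr rfl fun v _ => hreg v,
      Finset.sum_const, Finset.card_univ, smul_eq_mul]
  have hexp : Fintype.card G.Dart - Fintype.card V = (r - 1) * Fintype.card V := by
    rw [hcardDart, Nat.sub_mul, one_mul, mul_comm]
  rw [part1, ← Matrix.charpoly_reindex E (1 + c • B), hreidx, charpoly_blockDiagonal'']
  have hblock : ((1 : Matrix (Fin r) (Fin r) ℝ) + c • Matrix.of (fun _ _ => (1:ℝ))).charpoly
      = (X - C (((r : ℝ) - 1) ^ 2)) * (X - C 1) ^ (r - 1) := by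
    have hval : (1 : ℝ) + c * (Fintype.card (Fin r)) = ((r : ℝ) - 1) ^ 2 := by
      rw [Fintype.card_fin, hc]
      ring
    rw [charpoly_one_add_smul_ones' (by simp; omega) c, hval, Fintype.card_fin]
  rw [hblock, Finset.prod_const, Finset.card_univ, mul_pow, ← pow_mul, hexp]
end
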